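/- arXiv:1401.0088 — 7 statements merged into one kernel-verified Lean document; each statement's English description precedes it below -/
import Mathlib

section
/- Let R be a commutative ring with 1 and τ a symmetric relation on R#. If a nonunit a ∈ R is τ-unrefinably irreducible, then a is both τ-strongly irreducible and τ-m-irreducible. -/
variable {R : Type*} [CommRing R]

/-- A τ-factorization of `a`: `a = u * (a₁ ⋯ aₙ)` with `u` a unit, each factor a
nonunit, and distinct factors pairwise τ-related. -/
def IsTauFact (τ : R → R → Prop) (a : R) (l : List R) : Prop :=
  l ≠ [] ∧ (∀ b ∈ l, ¬ IsUnit b) ∧ l.Pairwise τ ∧ ∃ u : Rˣ, a = u * l.prod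

/-- `l'` is obtained from `l` by replacing each entry by a τ-factorization of it. -/
def IsRefinement (τ : R → R → Prop) (l l' : List R) : Prop :=
  ∃ L : List (List R), List.Forall₂ (IsTauFact τ) l L ∧ l' = L.flatten

/-- A τ-complete factorization: a τ-factorization admitting no strictly longer
τ-refinement which is itself a τ-factorization. -/
def IsTauComplete (τ : R → R → Prop) (a : R) (l : List R) : Prop :=
  IsTauFact τ a l ∧
    ∀ l', IsRefinement τ l l' → IsTauFact τ a l' → l'.length ≤ l.length

/-- τ is refinable: every τ-refinement of a τ-factorization is a τ-factorization. -/
def Refinable (τ : R → R → Prop) : Prop :=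
  ∀ (a : R) (l l' : List R), IsTauFact τ a l → IsRefinement τ l l' → IsTauFact τ a l'

/-- τ-unrefinably irreducible: a nonunit with only trivial τ-factorizations. -/
def UnrefIrred (τ : R → R → Prop) (a : R) : Prop :=
  ¬ IsUnit a ∧ ∀ l, IsTauFact τ a l → l.length = 1

theorem UnrefIrred.exists_eq_singleton {τ : R → R → Prop} {a : R} {l : List R}
    (hirr : UnrefIrred τ a) (hl : IsTauFact τ a l) : ∃ b, l = [b] ∧ ∃ u : Rˣ, a = u * b := by
  obtain ⟨b, rfl⟩ := List.length_eq_one_iff.mp (hirr.2 l hl)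
  obtain ⟨-, -, -, u, hu⟩ := hl
  exact ⟨b, rfl, u, by simpa using hu⟩

theorem stmt1_general (τ : R → R → Prop) (a : R)
    (hirr : UnrefIrred τ a) :
    (∀ l, IsTauFact τ a l → ∃ b ∈ l, ∃ u : Rˣ, a = u * b) ∧
    (∀ l, IsTauFact τ a l → ∀ b ∈ l, Ideal.span {a} = Ideal.span {b}) := by
  refine ⟨fun l hl => ?_, fun l hl b hb => ?_⟩ <;>
    obtain ⟨c, rfl, u, rfl⟩ := hirr.exists_eq_singleton hl
  · exact ⟨c, List.mem_singleton_self c, u, rfl⟩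
  · rw [List.mem_singleton.mp hb, Ideal.span_singleton_mul_left_unit u.isUnit]

theorem stmt1 (τ : R → R → Prop) (hsym : Symmetric τ) (a : R) (ha : ¬ IsUnit a)
    (hirr : UnrefIrred τ a) :
    (∀ l, IsTauFact τ a l → ∃ b ∈ l, ∃ u : Rˣ, a = u * b) ∧
    (∀ l, IsTauFact τ a l → ∀ b ∈ l, Ideal.span {a} = Ideal.span {b}) :=
  stmt1_general τ a hirr
end

section
/- Let R be a commutative ring with 1 and τ a refinable symmetric relation on R#. If a = λ a₁ ⋯ aₙ is a τ-complete factorization, then each aᵢ is τ-unrefinably irreducible; that is, the factorization is a τ-unrefinably atomic factorization. -/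
variable {R : Type*} [CommRing R]

/-
Refining a single factor `b` of a τ-complete factorization by a τ-factorization `l'` of `b`,
and every other factor trivially by itself, is a τ-refinement; by refinability it is again a
τ-factorization of `a`, so completeness bounds its length and forces `l'` to have length one.
-/

section

variable {τ : R → R → Prop}

theorem isTauFact_singleton {x : R} (hx : ¬ IsUnit x) : IsTauFact τ x [x] :=
  ⟨List.cons_ne_nil _ _, by simpa using hx, List.pairwise_singleton _ _, 1, by simp⟩

theorem forall₂_isTauFact_map_singleton {m : List R} (hm : ∀ x ∈ m, ¬ IsUnit x) :
    List.Forall₂ (IsTauFact τ) m (m.map fun x => [x]) := by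
  induction m with
  | nil => exact List.Forall₂.nil
  | cons x xs ih =>
    exact .cons (isTauFact_singleton (hm x List.mem_cons_self))
      (ih fun y hy => hm y (List.mem_cons_of_mem _ hy))

theorem isRefinement_replace {l₁ l₂ l' : List R} {b : R}
    (hnu : ∀ x ∈ l₁ ++ b :: l₂, ¬ IsUnit x) (hb : IsTauFact τ b l') :
    IsRefinement τ (l₁ ++ b :: l₂) (l₁ ++ l' ++ l₂) := by
  refine ⟨l₁.map (fun x => [x]) ++ l' :: l₂.map (fun x => [x]), ?_, ?_⟩
  · exact List.rel_append (forall₂_isTauFact_map_singleton fun x hx => hnu x (by simp [hx]))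
      (.cons hb (forall₂_isTauFact_map_singleton fun x hx => hnu x (by simp [hx])))
  · simp [← List.flatMap_def, List.flatMap_singleton']

end

theorem stmt4_general (τ : R → R → Prop) (href : Refinable τ)
    (a : R) (l : List R) (hc : IsTauComplete τ a l) :
    ∀ b ∈ l, ∀ l', IsTauFact τ b l' → l'.length = 1 := by
  intro b hb l' hb'
  obtain ⟨l₁, l₂, rfl⟩ := List.append_of_mem hb
  have hRef := isRefinement_replace hc.1.2.1 hb'
  have hle := hc.2 _ hRef (href a _ _ hc.1 hRef)
  have hpos : 0 < l'.length := List.length_pos_iff.mpr hb'.1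
  simp only [List.length_append, List.length_cons] at hle
  omega

theorem stmt4 (τ : R → R → Prop) (hsym : Symmetric τ) (href : Refinable τ)
    (a : R) (l : List R) (hc : IsTauComplete τ a l) :
    ∀ b ∈ l, ∀ l', IsTauFact τ b l' → l'.length = 1 :=
  stmt4_general τ href a l hc
end

section
/- Let R be a présimplifiable commutative ring with 1 and τ a refinable symmetric relation on R#. Then a τ-factorization a = λ a₁ ⋯ aₙ is τ-complete if and only if it is a τ-very strongly atomic factorization (every aᵢ is τ-very strongly irreducible). -/
variable {R : Type*} [CommRing R]

/-
Refining one factor `b` of a τ-factorization by a τ-factorization of `b` of length `m`, and every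
other factor trivially, lengthens the factorization by `m - 1`; refinability makes the result a
τ-factorization again. So completeness forces every factor to have only length-one
τ-factorizations, and conversely such factors cannot lengthen any refinement. The condition
`b ≅ b` on the factors is présimplifiability itself.
-/

theorem eq_zero_or_forall_isUnit_of_eq_mul_self {M : Type*} [CommMonoidWithZero M]
    (hpre : ∀ x y : M, x = x * y → x = 0 ∨ IsUnit y) (b : M) :
    b = 0 ∨ ∀ r : M, b = r * b → IsUnit r :=
  or_iff_not_imp_left.mpr fun hb0 r hr => (hpre b r (hr.trans (mul_comm r b))).resolve_left hb0

section

variable {τ : R → R → Prop}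

theorem IsTauFact.singleton {c : R} (hc : ¬ IsUnit c) : IsTauFact τ c [c] :=
  ⟨List.cons_ne_nil _ _, by simpa, List.pairwise_singleton _ _, 1, by simp⟩

theorem IsTauFact.length_pos {a : R} {l : List R} (h : IsTauFact τ a l) : 0 < l.length :=
  List.length_pos_iff.mpr h.1

theorem forall₂_isTauFact_singletons {l : List R} (hl : ∀ c ∈ l, ¬ IsUnit c) :
    List.Forall₂ (IsTauFact τ) l (l.map fun c => [c]) :=
  List.forall₂_map_right_iff.mpr <| List.forall₂_same.mpr fun c hc => .singleton (hl c hc)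

theorem isRefinement_append_cons {s t l' : List R} {b : R} (hs : ∀ c ∈ s, ¬ IsUnit c)
    (ht : ∀ c ∈ t, ¬ IsUnit c) (hb : IsTauFact τ b l') :
    IsRefinement τ (s ++ b :: t) (s ++ l' ++ t) := by
  refine ⟨s.map (fun c => [c]) ++ l' :: t.map (fun c => [c]), ?_, ?_⟩
  · exact List.rel_append (forall₂_isTauFact_singletons hs)
      (.cons hb (forall₂_isTauFact_singletons ht))
  · simp [← List.flatMap_def]

theorem IsRefinement.length_eq {l l' : List R} (h : IsRefinement τ l l')
    (hl : ∀ b ∈ l, ∀ m, IsTauFact τ b m → m.length = 1) : l'.length = l.length := by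
  obtain ⟨L, hL, rfl⟩ := h
  induction hL with
  | nil => rfl
  | @cons b m l L hbm _ ih =>
    rw [List.flatten_cons, List.length_append, hl b List.mem_cons_self m hbm,
      ih fun c hc => hl c (List.mem_cons_of_mem _ hc), List.length_cons, add_comm]

theorem IsTauComplete.length_eq_one (href : Refinable τ) {a b : R} {l m : List R}
    (hl : IsTauComplete τ a l) (hb : b ∈ l) (hm : IsTauFact τ b m) : m.length = 1 := by
  obtain ⟨s, t, rfl⟩ := List.append_of_mem hb
  have hnu := hl.1.2.1
  have hrefine : IsRefinement τ (s ++ b :: t) (s ++ m ++ t) :=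
    isRefinement_append_cons (fun c hc => hnu c (by simp [hc]))
      (fun c hc => hnu c (by simp [hc])) hm
  have hle := hl.2 _ hrefine (href _ _ _ hl.1 hrefine)
  simp only [List.length_append, List.length_cons] at hle
  have := hm.length_pos
  omega

theorem isTauComplete_of_length_eq_one {a : R} {l : List R} (hl : IsTauFact τ a l)
    (h : ∀ b ∈ l, ∀ m, IsTauFact τ b m → m.length = 1) : IsTauComplete τ a l :=
  ⟨hl, fun _ hrefine _ => (hrefine.length_eq h).le⟩

end

theorem stmt7_general (τ : R → R → Prop) (href : Refinable τ)
    (hpre : ∀ x y : R, x = x * y → x = 0 ∨ IsUnit y)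
    (a : R) (l : List R) (hf : IsTauFact τ a l) :
    IsTauComplete τ a l ↔
      ∀ b ∈ l, (b = 0 ∨ ∀ r : R, b = r * b → IsUnit r) ∧
        ∀ l', IsTauFact τ b l' → l'.length = 1 := by
  exact ⟨fun hl b hb =>
      ⟨eq_zero_or_forall_isUnit_of_eq_mul_self hpre b, fun _ => hl.length_eq_one href hb⟩,
    fun h => isTauComplete_of_length_eq_one hf fun b hb => (h b hb).2⟩

theorem stmt7 (τ : R → R → Prop) (hsym : Symmetric τ) (href : Refinable τ)
    (hpre : ∀ x y : R, x = x * y → x = 0 ∨ IsUnit y)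
    (a : R) (l : List R) (hf : IsTauFact τ a l) :
    IsTauComplete τ a l ↔
      ∀ b ∈ l, (b = 0 ∨ ∀ r : R, b = r * b → IsUnit r) ∧
        ∀ l', IsTauFact τ b l' → l'.length = 1 :=
  stmt7_general τ href hpre a l hf
end

section
/- Let R be a commutative ring with 1 and τ a refinable symmetric relation on R#. If a = λ a₁ ⋯ aₙ is a τ-factorization and each aᵢ = λᵢ b_{i1} ⋯ b_{im_i} is a τ-complete factorization, then the refined factorization a = (λλ₁⋯λₙ) b_{11} ⋯ b_{1m₁} ⋯ b_{n1} ⋯ b_{nm_n} is a τ-complete factorization. -/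
variable {R : Type*} [CommRing R]

/-!
Refining a τ-factorization by τ-factorizations of its factors gives a τ-factorization, by
refinability. For completeness, split a further τ-refinement of the refined factorization
into the blocks coming from the individual `aᵢ`: each block is a τ-refinement of the
τ-complete factorization of `aᵢ`, and again a τ-factorization by refinability, so it is
no longer than that factorization. Summing over `i` bounds the total length.
-/

theorem List.Forall₂.take_drop_of_append_left {α β : Type*} {P : α → β → Prop}
    {l₁ l₂ : List α} {m : List β} (h : List.Forall₂ P (l₁ ++ l₂) m) :
    List.Forall₂ P l₁ (m.take l₁.length) ∧ List.Forall₂ P l₂ (m.drop l₁.length) := by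
  constructor
  · simpa using List.forall₂_take l₁.length h
  · simpa using List.forall₂_drop l₁.length h

theorem IsTauComplete.length_flatten_le {τ : R → R → Prop} (href : Refinable τ) {b : R}
    {m : List R} {M : List (List R)} (hb : IsTauComplete τ b m)
    (hM : List.Forall₂ (IsTauFact τ) m M) :
    M.flatten.length ≤ m.length :=
  hb.2 _ ⟨M, hM, rfl⟩ (href b m _ hb.1 ⟨M, hM, rfl⟩)

theorem length_flatten_le_of_forall₂_isTauComplete {τ : R → R → Prop} (href : Refinable τ)
    {l : List R} {L : List (List R)} (hL : List.Forall₂ (IsTauComplete τ) l L)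
    {L' : List (List R)} (hL' : List.Forall₂ (IsTauFact τ) L.flatten L') :
    L'.flatten.length ≤ L.flatten.length := by
  induction hL generalizing L' with
  | nil =>
    obtain rfl : L' = [] := List.forall₂_nil_left_iff.mp hL'
    rfl
  | @cons b m l L hm _ ih =>
    obtain ⟨hhead, htail⟩ := List.Forall₂.take_drop_of_append_left hL'
    have hhead_le := hm.length_flatten_le href hhead
    have htail_le := ih htail
    rw [← List.take_append_drop m.length L']
    simp only [List.flatten_cons, List.flatten_append, List.length_append]
    omega

theorem stmt8_general (τ : R → R → Prop) (href : Refinable τ)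
    (a : R) (l : List R) (L : List (List R)) (hf : IsTauFact τ a l)
    (hL : List.Forall₂ (IsTauComplete τ) l L) :
    IsTauComplete τ a L.flatten := by
  have hLf : List.Forall₂ (IsTauFact τ) l L := hL.imp fun _ _ h => h.1
  refine ⟨href a l L.flatten hf ⟨L, hLf, rfl⟩, ?_⟩
  rintro _ ⟨L', hL', rfl⟩ -
  exact length_flatten_le_of_forall₂_isTauComplete href hL hL'

theorem stmt8 (τ : R → R → Prop) (hsym : Symmetric τ) (href : Refinable τ)
    (a : R) (l : List R) (L : List (List R)) (hf : IsTauFact τ a l)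
    (hL : List.Forall₂ (IsTauComplete τ) l L) :
    IsTauComplete τ a L.flatten :=
  stmt8_general τ href a l L hf hL
end

section
/- Let R be a commutative ring with 1 and τ a symmetric relation on R#. If R is τ-unrefinably atomic, then R is τ-complete (every nonunit has a τ-complete factorization). -/
variable {R : Type*} [CommRing R]

theorem IsRefinement.length_eq_of_unrefIrred {τ : R → R → Prop} {l l' : List R}
    (href : IsRefinement τ l l') (hirr : ∀ b ∈ l, UnrefIrred τ b) :
    l'.length = l.length := by
  obtain ⟨L, hL, rfl⟩ := href
  induction hL with
  | nil => rfl
  | @cons b fb l L hfb _ ih =>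
    have hfb_len : fb.length = 1 := (hirr b List.mem_cons_self).2 fb hfb
    simp only [List.flatten_cons, List.length_append, List.length_cons, hfb_len,
      ih fun c hc => hirr c (List.mem_cons_of_mem b hc)]
    omega

theorem IsTauFact.isTauComplete_of_unrefIrred {τ : R → R → Prop} {a : R} {l : List R}
    (hl : IsTauFact τ a l) (hirr : ∀ b ∈ l, UnrefIrred τ b) : IsTauComplete τ a l :=
  ⟨hl, fun _ href _ => (href.length_eq_of_unrefIrred hirr).le⟩

theorem stmt9_general (τ : R → R → Prop)
    (h : ∀ a : R, ¬ IsUnit a →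
      ∃ l, IsTauFact τ a l ∧ ∀ b ∈ l, UnrefIrred τ b) :
    ∀ a : R, ¬ IsUnit a → ∃ l, IsTauComplete τ a l := by
  intro a ha
  obtain ⟨l, hl, hirr⟩ := h a ha
  exact ⟨l, hl.isTauComplete_of_unrefIrred hirr⟩

theorem stmt9 (τ : R → R → Prop) (hsym : Symmetric τ)
    (h : ∀ a : R, ¬ IsUnit a →
      ∃ l, IsTauFact τ a l ∧ ∀ b ∈ l, UnrefIrred τ b) :
    ∀ a : R, ¬ IsUnit a → ∃ l, IsTauComplete τ a l :=
  stmt9_general τ h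
end

section
/- Let R be a commutative ring with 1 and τ a refinable symmetric relation on R#, with R τ-complete. If R is a τ-complete-β-FFR, then R is a τ-β-FFR: every nonunit has only finitely many τ-factorizations up to reordering and β. -/
variable {R : Type*} [CommRing R]

/-- Two factorizations agree up to reordering and associates. -/
def AssocListEq (l m : List R) : Prop :=
  ∃ m' : List R, m.Perm m' ∧
    List.Forall₂ (fun x y : R => Ideal.span {x} = Ideal.span {y}) l m'

/-!
Refine each factor of a τ-factorization `l` of `a` into a τ-complete factorization. Since τ is
refinable, the concatenation is a τ-factorization of `a`, and it is again τ-complete: a longer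
refinement of it would, block by block, lengthen one of the complete factorizations of a factor.
So the concatenation agrees, up to order and associates, with one of the finitely many τ-complete
representatives of `a`, and `l` agrees with the products of consecutive blocks of a permutation of
that representative. For a fixed list there are only finitely many such block products.
-/

open List

theorem List.Forall₂.exists_mem_left_of_mem_right {α β : Type*} {r : α → β → Prop}
    {l : List α} {m : List β} (h : Forall₂ r l m) {y : β} (hy : y ∈ m) : ∃ x ∈ l, r x y := by
  induction h with
  | nil => simp at hy
  | @cons x y' l m hxy _ ih =>
    rcases mem_cons.mp hy with rfl | hy
    · exact ⟨x, mem_cons_self, hxy⟩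
    · obtain ⟨x', hx', hr⟩ := ih hy
      exact ⟨x', mem_cons_of_mem x hx', hr⟩

theorem List.Forall₂.comp {α β γ : Type*} {p : α → β → Prop} {q : β → γ → Prop}
    {r : α → γ → Prop} (hpq : ∀ a b c, p a b → q b c → r a c) {l : List α} {m : List β}
    {n : List γ} (hp : Forall₂ p l m) (hq : Forall₂ q m n) : Forall₂ r l n := by
  induction hp generalizing n with
  | nil => rw [forall₂_nil_left_iff.mp hq]; exact .nil
  | cons hab _ ih =>
    obtain ⟨c, n, hbc, hq_tail, rfl⟩ := forall₂_cons_left_iff.mp hq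
    exact .cons (hpq _ _ _ hab hbc) (ih hq_tail)

theorem List.Forall₂.exists_of_flatten_left {α β : Type*} {r : α → β → Prop} :
    ∀ {K : List (List α)} {L : List β}, Forall₂ r K.flatten L →
      ∃ M : List (List β), Forall₂ (Forall₂ r) K M ∧ M.flatten = L
  | [], L, h => ⟨[], .nil, by simpa using (forall₂_nil_left_iff.mp h).symm⟩
  | k :: K, L, h => by
    rw [flatten_cons] at h
    obtain ⟨M, hM, hML⟩ := exists_of_flatten_left (by simpa using forall₂_drop k.length h)
    exact ⟨L.take k.length :: M, .cons (by simpa using forall₂_take k.length h) hM,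
      by simp [hML]⟩

theorem List.exists_unit_mul_prod_of_forall₂ {M : Type*} [CommMonoid M] {l m : List M}
    (h : Forall₂ (fun x y => ∃ u : Mˣ, x = (u : M) * y) l m) : ∃ u : Mˣ, l.prod = u * m.prod :=
  rel_prod (R := fun x y => ∃ u : Mˣ, x = (u : M) * y) ⟨1, by simp⟩
    (fun _ _ ⟨u, hu⟩ _ _ ⟨v, hv⟩ => ⟨u * v, by rw [hu, hv, Units.val_mul, mul_mul_mul_comm]⟩) h

theorem Ideal.span_singleton_prod_eq_of_forall₂ {S : Type*} [CommSemiring S] {l m : List S}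
    (h : Forall₂ (fun x y => Ideal.span {x} = Ideal.span {y}) l m) :
    Ideal.span {l.prod} = Ideal.span {m.prod} :=
  rel_prod (R := fun x y => Ideal.span {x} = Ideal.span {y}) rfl (fun _ _ hab _ _ hcd => by
    simp only [← Ideal.span_singleton_mul_span_singleton, hab, hcd]) h

def blockProducts {M : Type*} [Monoid M] (m : List M) : Set (List M) :=
  {c | ∃ B : List (List M), B.flatten ~ m ∧ [] ∉ B ∧ c = B.map prod}

theorem blockProducts_finite {M : Type*} [Monoid M] (m : List M) : (blockProducts m).Finite := by
  refine ((List.finite_toSet m.permutations).biUnion fun q _ =>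
    Set.finite_range fun c : Composition q.length => (q.splitWrtComposition c).map prod).subset ?_
  rintro _ ⟨B, hperm, hne, rfl⟩
  have hpos : ∀ n ∈ B.map length, 0 < n := by
    intro n hn
    obtain ⟨blk, hblk, rfl⟩ := mem_map.mp hn
    exact length_pos_iff.mpr (ne_of_mem_of_not_mem hblk hne)
  refine Set.mem_biUnion (x := B.flatten) (mem_permutations.mpr hperm)
    ⟨⟨B.map length, hpos _, length_flatten.symm⟩, ?_⟩
  change map prod (B.flatten.splitWrtComposition _) = map prod B
  rw [splitWrtComposition_flatten B _ rfl]

section Factorization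

variable {τ : R → R → Prop}

theorem IsTauFact.flatten {b : R} {k : List R} {m : List (List R)} (hk : IsTauFact τ b k)
    (hm : Forall₂ (IsTauFact τ) k m) (hp : m.flatten.Pairwise τ) : IsTauFact τ b m.flatten := by
  obtain ⟨hk_ne, -, -, v, hv⟩ := hk
  refine ⟨?_, ?_, hp, ?_⟩
  · obtain ⟨blk, hblk⟩ := exists_mem_of_ne_nil m fun hm_nil =>
      hk_ne (forall₂_nil_right_iff.mp (hm_nil ▸ hm))
    obtain ⟨y, -, hy⟩ := hm.exists_mem_left_of_mem_right hblk
    rw [Ne, flatten_eq_nil_iff]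
    exact fun h => hy.1 (h blk hblk)
  · intro x hx
    obtain ⟨blk, hblk, hx_blk⟩ := mem_flatten.mp hx
    obtain ⟨y, -, hy⟩ := hm.exists_mem_left_of_mem_right hblk
    exact hy.2.1 x hx_blk
  · obtain ⟨w, hw⟩ := exists_unit_mul_prod_of_forall₂
      (forall₂_map_right_iff.mpr (hm.imp fun _ _ h => h.2.2.2))
    exact ⟨v * w, by rw [hv, hw, prod_flatten, Units.val_mul, mul_assoc]⟩

theorem IsTauFact.span_singleton_eq {b : R} {k : List R} (hk : IsTauFact τ b k) :
    Ideal.span {b} = Ideal.span {k.prod} := by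
  obtain ⟨-, -, -, u, rfl⟩ := hk
  exact Ideal.span_singleton_mul_left_unit u.isUnit _

theorem IsTauComplete.length_flatten_le_s16 {b : R} {k : List R} {m : List (List R)}
    (hk : IsTauComplete τ b k) (hm : Forall₂ (IsTauFact τ) k m) (hp : m.flatten.Pairwise τ) :
    m.flatten.length ≤ k.length :=
  hk.2 _ ⟨m, hm, rfl⟩ (hk.1.flatten hm hp)

theorem length_flatten_flatten_le_of_isTauComplete {l : List R} {K : List (List R)}
    {M : List (List (List R))} (hK : Forall₂ (IsTauComplete τ) l K)
    (hM : Forall₂ (Forall₂ (IsTauFact τ)) K M) (hp : M.flatten.flatten.Pairwise τ) :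
    M.flatten.flatten.length ≤ K.flatten.length := by
  induction hK generalizing M with
  | nil => simp [forall₂_nil_left_iff.mp hM]
  | cons hbk _ ih =>
    obtain ⟨m, M, hkm, hM_tail, rfl⟩ := forall₂_cons_left_iff.mp hM
    simp only [flatten_cons, flatten_append, pairwise_append] at hp
    have hm := hbk.length_flatten_le_s16 hkm hp.1
    have hM_tail := ih hM_tail hp.2.1
    simp only [flatten_cons, flatten_append, length_append]
    omega

theorem IsTauFact.isTauComplete_flatten (href : Refinable τ) {a : R} {l : List R}
    {K : List (List R)} (hl : IsTauFact τ a l) (hK : Forall₂ (IsTauComplete τ) l K) :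
    IsTauComplete τ a K.flatten := by
  refine ⟨href a l _ hl ⟨K, hK.imp fun _ _ h => h.1, rfl⟩, ?_⟩
  rintro _ ⟨L, hL, rfl⟩ hfact
  obtain ⟨M, hM, rfl⟩ := hL.exists_of_flatten_left
  exact length_flatten_flatten_le_of_isTauComplete hK hM hfact.2.2.1

theorem IsTauFact.exists_forall₂_isTauComplete
    (hcompl : ∀ b : R, ¬ IsUnit b → ∃ k, IsTauComplete τ b k) {a : R} {l : List R}
    (hl : IsTauFact τ a l) : ∃ K, Forall₂ (IsTauComplete τ) l K := by
  choose! f hf using hcompl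
  exact ⟨l.map f, forall₂_map_right_iff.mpr (forall₂_same.mpr fun b hb => hf b (hl.2.1 b hb))⟩

theorem AssocListEq.exists_mem_blockProducts {l m : List R} {K : List (List R)}
    (hK : Forall₂ (IsTauFact τ) l K) (hm : AssocListEq K.flatten m) :
    ∃ c ∈ blockProducts m, AssocListEq l c := by
  obtain ⟨m', hperm, hKm'⟩ := hm
  obtain ⟨B, hKB, rfl⟩ := hKm'.exists_of_flatten_left
  refine ⟨B.map prod, ⟨B, hperm.symm, fun hB => ?_, rfl⟩, B.map prod, Perm.refl _, ?_⟩
  · obtain ⟨k, hk, hk_nil⟩ := hKB.exists_mem_left_of_mem_right hB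
    obtain ⟨b, -, hbk⟩ := hK.exists_mem_left_of_mem_right hk
    exact hbk.1 (forall₂_nil_right_iff.mp hk_nil)
  · exact forall₂_map_right_iff.mpr <| hK.comp (fun _ _ _ hbk hkB =>
      hbk.span_singleton_eq.trans (Ideal.span_singleton_prod_eq_of_forall₂ hkB)) hKB

end Factorization

theorem stmt16_general (τ : R → R → Prop) (href : Refinable τ)
    (hcompl : ∀ a : R, ¬ IsUnit a → ∃ l, IsTauComplete τ a l)
    (hffr : ∀ a : R, ¬ IsUnit a → ∃ S : Set (List R), S.Finite ∧
      ∀ l, IsTauComplete τ a l → ∃ m ∈ S, AssocListEq l m) :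
    ∀ a : R, ¬ IsUnit a → ∃ S : Set (List R), S.Finite ∧
      ∀ l, IsTauFact τ a l → 2 ≤ l.length → ∃ m ∈ S, AssocListEq l m := by
  intro a ha
  obtain ⟨S, hS_fin, hS⟩ := hffr a ha
  refine ⟨⋃ m ∈ S, blockProducts m, hS_fin.biUnion fun m _ => blockProducts_finite m, ?_⟩
  intro l hl _
  obtain ⟨K, hK⟩ := hl.exists_forall₂_isTauComplete hcompl
  obtain ⟨m, hmS, hKm⟩ := hS _ (hl.isTauComplete_flatten href hK)
  obtain ⟨c, hc, hlc⟩ := hKm.exists_mem_blockProducts (hK.imp fun _ _ h => h.1)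
  exact ⟨c, Set.mem_biUnion hmS hc, hlc⟩

theorem stmt16 (τ : R → R → Prop) (hsym : Symmetric τ) (href : Refinable τ)
    (hcompl : ∀ a : R, ¬ IsUnit a → ∃ l, IsTauComplete τ a l)
    (hffr : ∀ a : R, ¬ IsUnit a → ∃ S : Set (List R), S.Finite ∧
      ∀ l, IsTauComplete τ a l → ∃ m ∈ S, AssocListEq l m) :
    ∀ a : R, ¬ IsUnit a → ∃ S : Set (List R), S.Finite ∧
      ∀ l, IsTauFact τ a l → 2 ≤ l.length → ∃ m ∈ S, AssocListEq l m :=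
  stmt16_general τ href hcompl hffr
end

section
/- Let R = ℤ and τ = {(±2,±2), (±3,±3), (±4,±9), (±9,±4)} (all sign combinations). Then the factorization 36 = 4·9 is a τ-complete factorization, yet neither 4 nor 9 is τ-irreducible (τ-atomic). -/
variable {R : Type*} [CommRing R]

/-- The relation τ = {(±2,±2), (±3,±3), (±4,±9), (±9,±4)} on ℤ. -/
def tauZ : ℤ → ℤ → Prop := fun x y =>
  (x.natAbs = 2 ∧ y.natAbs = 2) ∨ (x.natAbs = 3 ∧ y.natAbs = 3) ∨
  (x.natAbs = 4 ∧ y.natAbs = 9) ∨ (x.natAbs = 9 ∧ y.natAbs = 4)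

/-! Every refinement of `4 · 9` splits into a τ-factorization of 4 and one of 9 whose factors
are all τ-related across the split. A divisor of 4 and a divisor of 9 can only be τ-related as
`±4 τ ±9`, so both parts consist of factors of absolute value 4, resp. 9, and hence have length
one. On the other hand `4 = 2 · 2` and `9 = 3 · 3` are τ-factorizations with no factor
associated to the product. -/

section CommRing

variable {R : Type*} [CommRing R] {τ : R → R → Prop}

lemma isTauFact_pair {a b : R} (ha : ¬IsUnit a) (hb : ¬IsUnit b) (hab : τ a b) :
    IsTauFact τ (a * b) [a, b] :=
  ⟨by simp, by simp [ha, hb], List.pairwise_pair.mpr hab, ⟨1, by simp⟩⟩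

lemma IsTauFact.associated_prod {a : R} {l : List R} (h : IsTauFact τ a l) :
    Associated l.prod a := by
  obtain ⟨u, rfl⟩ := h.2.2.2
  exact ⟨u, mul_comm _ _⟩

lemma IsTauFact.dvd_of_mem {a b : R} {l : List R} (h : IsTauFact τ a l) (hb : b ∈ l) :
    b ∣ a :=
  (List.dvd_prod hb).trans h.associated_prod.dvd

lemma span_mul_self_ne_span_self [IsDomain R] {p : R} (hp0 : p ≠ 0) (hp : ¬IsUnit p) :
    Ideal.span {p * p} ≠ Ideal.span {p} := by
  rw [Ne, Ideal.span_singleton_eq_span_singleton]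
  rintro ⟨u, hu⟩
  rw [mul_assoc] at hu
  exact hp (IsUnit.of_mul_eq_one (u : R) (mul_left_cancel₀ hp0 (hu.trans (mul_one p).symm)))

lemma not_forall_isTauFact_exists_span_eq [IsDomain R] {p : R} (hp0 : p ≠ 0) (hp : ¬IsUnit p)
    (hτ : τ p p) :
    ¬ ∀ l, IsTauFact τ (p * p) l → ∃ b ∈ l, Ideal.span {p * p} = Ideal.span {b} := by
  intro h
  obtain ⟨b, hb, hspan⟩ := h [p, p] (isTauFact_pair hp hp hτ)
  obtain rfl : b = p := by simpa using hb
  exact span_mul_self_ne_span_self hp0 hp hspan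

end CommRing

lemma Int.length_eq_one_of_forall_natAbs_eq {l : List ℤ} {k : ℕ} (hk : 1 < k)
    (h : ∀ b ∈ l, b.natAbs = k) (hprod : l.prod.natAbs = k) : l.length = 1 := by
  have hpow : l.prod.natAbs = k ^ l.length := by
    rw [← Int.natAbsHom_apply, map_list_prod, List.prod_eq_pow_card _ k (by simpa using h),
      List.length_map]
  exact (Nat.pow_eq_self_iff hk).mp (hpow.symm.trans hprod)

lemma tauZ_dvd_four_dvd_nine {a b : ℤ} (ha : a.natAbs ∣ 4) (hb : b.natAbs ∣ 9)
    (hab : tauZ a b) : a.natAbs = 4 ∧ b.natAbs = 9 := by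
  rcases hab with ⟨h₁, h₂⟩ | ⟨h₁, h₂⟩ | ⟨h₁, h₂⟩ | ⟨h₁, h₂⟩ <;>
    rw [h₁] at ha <;> rw [h₂] at hb <;> omega

lemma length_le_two_of_isRefinement_four_nine {l : List ℤ} (hl : IsRefinement tauZ [4, 9] l)
    (hpair : l.Pairwise tauZ) : l.length ≤ 2 := by
  obtain ⟨L, hL, rfl⟩ := hl
  obtain ⟨L₄, _, h₄, hL₉, rfl⟩ := List.forall₂_cons_left_iff.mp hL
  obtain ⟨L₉, _, h₉, hnil, rfl⟩ := List.forall₂_cons_left_iff.mp hL₉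
  obtain rfl := List.forall₂_nil_left_iff.mp hnil
  have hcross : ∀ a ∈ L₄, ∀ b ∈ L₉, tauZ a b := by
    simpa using (List.pairwise_append.mp (by simpa using hpair)).2.2
  obtain ⟨a₀, ha₀⟩ := List.exists_mem_of_ne_nil _ h₄.1
  obtain ⟨b₀, hb₀⟩ := List.exists_mem_of_ne_nil _ h₉.1
  have hsplit : ∀ a ∈ L₄, ∀ b ∈ L₉, a.natAbs = 4 ∧ b.natAbs = 9 := fun a ha b hb =>
    tauZ_dvd_four_dvd_nine (Int.natAbs_dvd_natAbs.mpr (h₄.dvd_of_mem ha))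
      (Int.natAbs_dvd_natAbs.mpr (h₉.dvd_of_mem hb)) (hcross a ha b hb)
  have hlen₄ := Int.length_eq_one_of_forall_natAbs_eq (by norm_num)
    (fun a ha => (hsplit a ha b₀ hb₀).1) (Int.associated_iff_natAbs.mp h₄.associated_prod)
  have hlen₉ := Int.length_eq_one_of_forall_natAbs_eq (by norm_num)
    (fun b hb => (hsplit a₀ ha₀ b hb).2) (Int.associated_iff_natAbs.mp h₉.associated_prod)
  simp [hlen₄, hlen₉]

theorem stmt19 :
    IsTauComplete tauZ (36 : ℤ) [4, 9] ∧
    ¬ (∀ l, IsTauFact tauZ (4 : ℤ) l →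
        ∃ b ∈ l, Ideal.span {(4 : ℤ)} = Ideal.span {b}) ∧
    ¬ (∀ l, IsTauFact tauZ (9 : ℤ) l →
        ∃ b ∈ l, Ideal.span {(9 : ℤ)} = Ideal.span {b}) := by
  have hnonunit : ∀ n : ℤ, 1 < n.natAbs → ¬IsUnit n := fun n hn hu => by
    rw [Int.isUnit_iff_natAbs_eq] at hu; omega
  refine ⟨⟨?_, fun l hl hfact => length_le_two_of_isRefinement_four_nine hl hfact.2.2.1⟩, ?_, ?_⟩
  · simpa using isTauFact_pair (τ := tauZ) (hnonunit 4 (by decide)) (hnonunit 9 (by decide))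
      (by simp [tauZ])
  · rw [show (4 : ℤ) = 2 * 2 by norm_num]
    exact not_forall_isTauFact_exists_span_eq two_ne_zero (hnonunit 2 (by decide))
      (by simp [tauZ])
  · rw [show (9 : ℤ) = 3 * 3 by norm_num]
    exact not_forall_isTauFact_exists_span_eq three_ne_zero (hnonunit 3 (by decide))
      (by simp [tauZ])
end
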